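/- arXiv:2303.02086 — 4 statements merged into one kernel-verified Lean document; each statement's English description precedes it below -/
import Mathlib

section
/- Let μ be a non-negative Borel measure on ℝ with ∫ dμ(t)/(t²+1) < ∞, and let f ∈ L^∞(μ). Then for μ-almost every s ∈ ℝ, the quotient [∫ r·f(t)/((s−t)²+r²) dμ(t)] / [∫ r/((s−t)²+r²) dμ(t)] converges to f(s) as r ↓ 0. -/
open MeasureTheory Filter Set Topology

section FatouAuxSection
open Metric ENNReal

namespace FatouAux

lemma weight_ineq {r s : ℝ} (hr : 0 < r) (t : ℝ) :
    t ^ 2 + 1 ≤ (2 + (2 * s ^ 2 + 1) / r ^ 2) * ((s - t) ^ 2 + r ^ 2) := by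
  have hr2 : (0:ℝ) < r ^ 2 := by positivity
  have h1 : (2 * s ^ 2 + 1) / r ^ 2 * r ^ 2 = 2 * s ^ 2 + 1 := div_mul_cancel₀ _ hr2.ne'
  have h2 : (0:ℝ) ≤ (2 * s ^ 2 + 1) / r ^ 2 := by positivity
  nlinarith [sq_nonneg (t - 2 * s), sq_nonneg (s - t), mul_nonneg h2 (sq_nonneg (s - t))]

lemma weight_ineq' {δ s t : ℝ} (hδ : 0 < δ) (ht : δ ≤ |s - t|) :
    t ^ 2 + 1 ≤ (2 + (2 * s ^ 2 + 1) / δ ^ 2) * (s - t) ^ 2 := by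
  have hδ2 : (0:ℝ) < δ ^ 2 := by positivity
  have hst : δ ^ 2 ≤ (s - t) ^ 2 := by
    have := sq_abs (s - t); nlinarith [abs_nonneg (s - t)]
  have h1 : (2 * s ^ 2 + 1) / δ ^ 2 * δ ^ 2 = 2 * s ^ 2 + 1 := div_mul_cancel₀ _ hδ2.ne'
  have h2 : (0:ℝ) ≤ (2 * s ^ 2 + 1) / δ ^ 2 := by positivity
  nlinarith [sq_nonneg (t - 2 * s), mul_le_mul_of_nonneg_left hst h2]

lemma kernel_pos {r : ℝ} (hr : 0 < r) (s t : ℝ) : 0 < r / ((s - t) ^ 2 + r ^ 2) :=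
  div_pos hr (by positivity)

lemma kernel_cont {r : ℝ} (hr : 0 < r) (s : ℝ) :
    Continuous fun t : ℝ => r / ((s - t) ^ 2 + r ^ 2) := by
  apply continuous_const.div (by continuity)
  intro t; positivity

lemma kernel_integrable {μ : Measure ℝ} (hμ : Integrable (fun t : ℝ => 1 / (t ^ 2 + 1)) μ)
    {r : ℝ} (hr : 0 < r) (s : ℝ) :
    Integrable (fun t : ℝ => r / ((s - t) ^ 2 + r ^ 2)) μ := by
  refine (hμ.const_mul (r * (2 + (2 * s ^ 2 + 1) / r ^ 2))).mono'
    ((kernel_cont hr s).aestronglyMeasurable) (ae_of_all _ fun t => ?_)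
  rw [Real.norm_eq_abs, abs_of_pos (kernel_pos hr s t)]
  rw [div_le_iff₀ (by positivity)]
  have h := weight_ineq (s := s) hr t
  have ht : (0:ℝ) < t ^ 2 + 1 := by positivity
  have hC : (0:ℝ) ≤ 2 + (2 * s ^ 2 + 1) / r ^ 2 := by positivity
  calc r = r * (t ^ 2 + 1) * (1 / (t ^ 2 + 1)) := by field_simp
    _ ≤ r * ((2 + (2 * s ^ 2 + 1) / r ^ 2) * ((s - t) ^ 2 + r ^ 2)) * (1 / (t ^ 2 + 1)) := by
        gcongr
    _ = r * (2 + (2 * s ^ 2 + 1) / r ^ 2) * (1 / (t ^ 2 + 1)) * ((s - t) ^ 2 + r ^ 2) := by ring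

lemma locallyFinite {μ : Measure ℝ} (hμ : Integrable (fun t : ℝ => 1 / (t ^ 2 + 1)) μ) :
    IsLocallyFiniteMeasure μ := by
  constructor
  intro x
  refine ⟨closedBall x 1, closedBall_mem_nhds x one_pos, ?_⟩
  set c : ℝ := 1 / ((|x| + 1) ^ 2 + 1) with hc
  have hcpos : 0 < c := by positivity
  have hle : ∀ t ∈ closedBall x 1, ENNReal.ofReal c ≤ ENNReal.ofReal (1 / (t ^ 2 + 1)) := by
    intro t ht
    apply ENNReal.ofReal_le_ofReal
    have h1 : |t| ≤ |x| + 1 := by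
      have := mem_closedBall_iff_norm.1 ht
      calc |t| = |x + (t - x)| := by ring_nf
        _ ≤ |x| + |t - x| := abs_add_le _ _
        _ ≤ |x| + 1 := by
            have h2 : |t - x| ≤ 1 := by rwa [Real.norm_eq_abs] at this
            linarith
    have h3 : t ^ 2 ≤ (|x| + 1) ^ 2 := by
      rw [← sq_abs t]
      exact pow_le_pow_left₀ (abs_nonneg t) h1 2
    rw [hc]
    apply one_div_le_one_div_of_le (by positivity)
    linarith
  have key : ENNReal.ofReal c * μ (closedBall x 1) ≤
      ∫⁻ t in closedBall x 1, ENNReal.ofReal (1 / (t ^ 2 + 1)) ∂μ := by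
    rw [← setLIntegral_const]
    exact setLIntegral_mono (by measurability) hle
  have hfin : ∫⁻ t in closedBall x 1, ENNReal.ofReal (1 / (t ^ 2 + 1)) ∂μ < ⊤ := by
    have h2 := hμ.2
    rw [hasFiniteIntegral_iff_ofReal (ae_of_all _ fun t => by positivity)] at h2
    exact lt_of_le_of_lt (setLIntegral_le_lintegral _ _) h2
  by_contra h
  rw [not_lt_top_iff] at h
  rw [h, ENNReal.mul_top (by simp [hcpos.ne', hcpos])] at key
  exact (lt_of_le_of_lt key hfin).ne rfl

end FatouAux

namespace FatouAux

lemma ball_eq_iUnion {s ρ : ℝ} (hρ : 0 < ρ) :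
    ball s ρ = ⋃ n : ℕ, closedBall s (ρ - ρ / (n + 2)) := by
  ext t
  simp only [mem_iUnion, mem_ball, mem_closedBall]
  constructor
  · intro ht
    have hpos : 0 < ρ - dist t s := by linarith
    obtain ⟨n, hn⟩ := exists_nat_ge (ρ / (ρ - dist t s))
    refine ⟨n, ?_⟩
    have hn2 : ρ / (ρ - dist t s) ≤ (n : ℝ) + 2 := by linarith
    have : ρ ≤ ((n : ℝ) + 2) * (ρ - dist t s) := by
      rwa [div_le_iff₀ hpos] at hn2
    have h2 : ρ / ((n : ℝ) + 2) ≤ ρ - dist t s := by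
      rw [div_le_iff₀ (by positivity)]; linarith [this]
    linarith
  · rintro ⟨n, hn⟩
    have : 0 < ρ / ((n : ℝ) + 2) := by positivity
    linarith

/-- open-ball version of the closed-ball average bound -/
lemma ball_bound {μ : Measure ℝ} {g : ℝ → ℝ≥0∞} (hg : Measurable g) {s δ : ℝ} (hδ : 0 < δ)
    {c : ℝ≥0∞}
    (hball : ∀ R, 0 < R → R ≤ δ → ∫⁻ t in closedBall s R, g t ∂μ ≤ c * μ (closedBall s R))
    {ρ : ℝ} (hρδ : ρ ≤ δ) :
    ∫⁻ t in ball s ρ, g t ∂μ ≤ c * μ (ball s ρ) := by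
  rcases le_or_gt ρ 0 with h | h
  · rw [ball_eq_empty.2 h]; simp
  · set σ : Measure ℝ := μ.withDensity g with hσ
    have hσap : ∀ A : Set ℝ, MeasurableSet A → σ A = ∫⁻ t in A, g t ∂μ :=
      fun A hA => withDensity_apply g hA
    have hmono : Monotone fun n : ℕ => closedBall s (ρ - ρ / (n + 2)) := by
      intro n m hnm
      apply closedBall_subset_closedBall
      have hnm' : ((n:ℝ) + 2) ≤ (m:ℝ) + 2 := by
        have : (n:ℝ) ≤ (m:ℝ) := Nat.cast_le.2 hnm
        linarith
      have : ρ / ((m : ℝ) + 2) ≤ ρ / ((n : ℝ) + 2) :=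
        div_le_div_of_nonneg_left h.le (by positivity) hnm'
      linarith
    have hcb : ∀ n : ℕ, σ (closedBall s (ρ - ρ / (n + 2))) ≤ c * μ (ball s ρ) := by
      intro n
      have hRpos : 0 < ρ - ρ / ((n : ℝ) + 2) := by
        have h1 : ρ / ((n : ℝ) + 2) < ρ := by
          rw [div_lt_iff₀ (by positivity)]
          nlinarith
        linarith
      have hRlt : ρ - ρ / ((n : ℝ) + 2) < ρ := by
        have : 0 < ρ / ((n : ℝ) + 2) := by positivity
        linarith
      calc σ (closedBall s (ρ - ρ / (n + 2)))
          = ∫⁻ t in closedBall s (ρ - ρ / (n + 2)), g t ∂μ := hσap _ measurableSet_closedBall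
        _ ≤ c * μ (closedBall s (ρ - ρ / (n + 2))) := hball _ hRpos (le_trans hRlt.le hρδ)
        _ ≤ c * μ (ball s ρ) := by
            gcongr
            exact closedBall_subset_ball hRlt
    have : σ (ball s ρ) = ⨆ n : ℕ, σ (closedBall s (ρ - ρ / (n + 2))) := by
      rw [ball_eq_iUnion h]
      exact Directed.measure_iUnion hmono.directed_le
    rw [← hσap _ measurableSet_ball, this]
    exact iSup_le hcb

lemma near_bound (μ : Measure ℝ) {g : ℝ → ℝ} (hg : Measurable g) (hgnn : ∀ t, 0 ≤ g t)
    {s δ : ℝ} (hδ : 0 < δ) {c : ℝ≥0∞} (hc : c ≠ ⊤)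
    (hball : ∀ R, 0 < R → R ≤ δ →
      ∫⁻ t in closedBall s R, ENNReal.ofReal (g t) ∂μ ≤ c * μ (closedBall s R))
    {r : ℝ} (hr : 0 < r) :
    ∫⁻ t in closedBall s δ, ENNReal.ofReal (r / ((s - t) ^ 2 + r ^ 2) * g t) ∂μ ≤
      c * ∫⁻ t, ENNReal.ofReal (r / ((s - t) ^ 2 + r ^ 2)) ∂μ := by
  set k : ℝ → ℝ := fun t => r / ((s - t) ^ 2 + r ^ 2) with hk
  have hkm : Measurable k := (kernel_cont hr s).measurable
  set w : ℝ → ℝ≥0∞ := (closedBall s δ).indicator (fun t => ENNReal.ofReal (g t)) with hw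
  have hwm : Measurable w := (measurable_ofReal.comp hg).indicator measurableSet_closedBall
  set ν : Measure ℝ := μ.withDensity w with hν
  -- key : ν of any open ball is ≤ c * μ of the same ball
  have key : ∀ ρ : ℝ, ν (ball s ρ) ≤ c * μ (ball s ρ) := by
    intro ρ
    rw [hν, withDensity_apply _ measurableSet_ball]
    have : ∫⁻ t in ball s ρ, w t ∂μ = ∫⁻ t in ball s ρ ∩ closedBall s δ, ENNReal.ofReal (g t) ∂μ := by
      rw [hw, lintegral_indicator measurableSet_closedBall, Measure.restrict_restrict
        measurableSet_closedBall, Set.inter_comm]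
    rw [this]
    rcases le_or_gt ρ δ with hρδ | hρδ
    · have hsub : ball s ρ ∩ closedBall s δ = ball s ρ :=
        inter_eq_left.2 ((ball_subset_ball hρδ).trans ball_subset_closedBall)
      rw [hsub]
      exact ball_bound (measurable_ofReal.comp hg) hδ hball hρδ
    · have hsub : ball s ρ ∩ closedBall s δ = closedBall s δ :=
        inter_eq_right.2 (closedBall_subset_ball hρδ)
      rw [hsub]
      calc ∫⁻ t in closedBall s δ, ENNReal.ofReal (g t) ∂μ
          ≤ c * μ (closedBall s δ) := hball δ hδ le_rfl
        _ ≤ c * μ (ball s ρ) := by gcongr; exact closedBall_subset_ball hρδ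
  -- level sets of the kernel are open balls
  have hlevel : ∀ lam : ℝ, 0 < lam →
      {t : ℝ | lam < k t} = ball s (Real.sqrt (r / lam - r ^ 2)) := by
    intro lam hlam
    ext t
    have hP : (0:ℝ) < (s - t) ^ 2 + r ^ 2 := by positivity
    simp only [mem_setOf_eq, mem_ball, Real.dist_eq]
    rw [Real.lt_sqrt (abs_nonneg _), sq_abs]
    constructor
    · intro hlt
      have h1 : lam * ((s - t) ^ 2 + r ^ 2) < r := by
        rwa [lt_div_iff₀ hP] at hlt
      have h2 : (s - t) ^ 2 + r ^ 2 < r / lam := by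
        rw [lt_div_iff₀ hlam]; linarith [mul_comm lam ((s - t) ^ 2 + r ^ 2) ▸ h1]
      have : (t - s) ^ 2 = (s - t) ^ 2 := by ring
      linarith [this]
    · intro hlt
      have h2 : (s - t) ^ 2 + r ^ 2 < r / lam := by
        have : (t - s) ^ 2 = (s - t) ^ 2 := by ring
        linarith [this]
      rw [lt_div_iff₀ hP]
      rw [lt_div_iff₀ hlam] at h2
      linarith [h2]
  -- layer cake for ν and μ
  have hknn : ∀ t, 0 ≤ k t := fun t => (kernel_pos hr s t).le
  have layer_ν : ∫⁻ t, ENNReal.ofReal (k t) ∂ν = ∫⁻ lam in Ioi (0:ℝ), ν {t | lam < k t} :=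
    lintegral_eq_lintegral_meas_lt ν (ae_of_all _ hknn) hkm.aemeasurable
  have layer_μ : ∫⁻ t, ENNReal.ofReal (k t) ∂μ = ∫⁻ lam in Ioi (0:ℝ), μ {t | lam < k t} :=
    lintegral_eq_lintegral_meas_lt μ (ae_of_all _ hknn) hkm.aemeasurable
  -- identify LHS with ∫⁻ k dν
  have hLHS : ∫⁻ t in closedBall s δ, ENNReal.ofReal (k t * g t) ∂μ
      = ∫⁻ t, ENNReal.ofReal (k t) ∂ν := by
    rw [hν, lintegral_withDensity_eq_lintegral_mul μ hwm hkm.ennreal_ofReal]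
    have : (fun t => (w * fun t => ENNReal.ofReal (k t)) t)
        = (closedBall s δ).indicator fun t => ENNReal.ofReal (k t * g t) := by
      funext t
      by_cases ht : t ∈ closedBall s δ
      · simp only [hw, Pi.mul_apply, indicator_of_mem ht]
        rw [← ENNReal.ofReal_mul (hgnn t), mul_comm]
      · simp [hw, indicator_of_notMem ht]
    rw [this, lintegral_indicator measurableSet_closedBall]
  rw [hLHS, layer_ν]
  calc ∫⁻ lam in Ioi (0:ℝ), ν {t | lam < k t}
      ≤ ∫⁻ lam in Ioi (0:ℝ), c * μ {t | lam < k t} := by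
        apply lintegral_mono_ae
        rw [ae_restrict_iff' measurableSet_Ioi]
        refine ae_of_all _ fun lam hlam => ?_
        rw [hlevel lam hlam]
        exact key _
    _ = c * ∫⁻ lam in Ioi (0:ℝ), μ {t | lam < k t} := lintegral_const_mul' _ _ hc
    _ = c * ∫⁻ t, ENNReal.ofReal (k t) ∂μ := by rw [← layer_μ]

end FatouAux

namespace FatouAux

set_option maxHeartbeats 2000000 in
theorem main_aux (μ : Measure ℝ)
    (hμ : Integrable (fun t : ℝ => 1 / (t ^ 2 + 1)) μ)
    (f : ℝ → ℂ) (hfm : StronglyMeasurable f) (hf : MemLp f ⊤ μ) :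
    ∀ᵐ s ∂μ, Tendsto (fun r : ℝ =>
        (∫ t, ((r / ((s - t) ^ 2 + r ^ 2) : ℝ) : ℂ) * f t ∂μ) /
          ((∫ t, r / ((s - t) ^ 2 + r ^ 2) ∂μ : ℝ) : ℂ))
      (𝓝[>] 0) (𝓝 (f s)) := by
  haveI := locallyFinite hμ
  set K : ℝ := (eLpNormEssSup f μ).toReal with hKdef
  have hKtop : eLpNormEssSup f μ ≠ ⊤ := by
    have h := hf.2
    rwa [eLpNorm_exponent_top, lt_top_iff_ne_top] at h
  have hKae : ∀ᵐ t ∂μ, ‖f t‖ ≤ K := by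
    filter_upwards [ae_le_eLpNormEssSup (f := f) (μ := μ)] with t ht
    have h2 := ENNReal.toReal_mono hKtop ht
    simpa using h2
  have hK0 : (0:ℝ) ≤ K := ENNReal.toReal_nonneg
  have hloc : LocallyIntegrable f μ := by
    intro x
    refine ⟨closedBall x 1, closedBall_mem_nhds x one_pos, ?_⟩
    haveI : Fact (μ (closedBall x 1) < ⊤) := ⟨(isCompact_closedBall x 1).measure_lt_top⟩
    exact memLp_one_iff_integrable.1 ((hf.restrict _).mono_exponent le_top)
  filter_upwards [hKae, (Besicovitch.vitaliFamily μ).ae_tendsto_average_norm_sub hloc,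
    Besicovitch.ae_tendsto_rnDeriv volume μ, Measure.rnDeriv_lt_top volume μ]
    with s hsK havg0 hratio hfin
  have havg : Tendsto (fun R => ⨍ t in closedBall s R, ‖f t - f s‖ ∂μ) (𝓝[>] (0:ℝ)) (𝓝 0) :=
    havg0.comp (Besicovitch.tendsto_filterAt μ s)
  -- r^2 / μ(closedBall s r) → 0  in ℝ≥0∞
  have hr2 : Tendsto (fun r : ℝ => ENNReal.ofReal (r ^ 2) / μ (closedBall s r))
      (𝓝[>] (0:ℝ)) (𝓝 0) := by
    have t0 : Tendsto (fun r : ℝ => r / 2) (𝓝[>] (0:ℝ)) (𝓝 0) := by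
      have h1 : Tendsto (fun r : ℝ => r / 2) (𝓝 (0:ℝ)) (𝓝 ((0:ℝ)/2)) :=
        (continuous_id.div_const 2).tendsto 0
      simpa using h1.mono_left nhdsWithin_le_nhds
    have t1 : Tendsto (fun r : ℝ => ENNReal.ofReal (r / 2)) (𝓝[>] (0:ℝ)) (𝓝 0) := by
      have := (ENNReal.continuous_ofReal.tendsto (0:ℝ)).comp t0
      simpa [Function.comp_def] using this
    have hmul := ENNReal.Tendsto.mul t1 (Or.inr hfin.ne) hratio
      (Or.inr (by simp : (0:ENNReal) ≠ ⊤))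
    rw [zero_mul] at hmul
    apply hmul.congr'
    filter_upwards [self_mem_nhdsWithin] with r hr
    have hr' : 0 < r := hr
    rw [Real.volume_closedBall, ← mul_div_assoc, ← ENNReal.ofReal_mul (by positivity)]
    congr 2
    ring
  have htoReal : Tendsto (fun r : ℝ => r ^ 2 / (μ (closedBall s r)).toReal)
      (𝓝[>] (0:ℝ)) (𝓝 0) := by
    have h1 := (ENNReal.tendsto_toReal (a := 0) (by simp)).comp hr2
    simp only [ENNReal.toReal_zero] at h1
    apply h1.congr
    intro r
    simp [Function.comp, ENNReal.toReal_div, ENNReal.toReal_ofReal (sq_nonneg r)]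
  have hmupos : ∀ᶠ r in 𝓝[>] (0:ℝ), 0 < μ (closedBall s r) := by
    have h1 : ∀ᶠ r in 𝓝[>] (0:ℝ),
        volume (closedBall s r) / μ (closedBall s r) < volume.rnDeriv μ s + 1 :=
      hratio.eventually_lt_const (ENNReal.lt_add_right hfin.ne one_ne_zero)
    filter_upwards [h1, self_mem_nhdsWithin] with r h2 hr
    have hr' : (0:ℝ) < r := hr
    rcases eq_or_ne (μ (closedBall s r)) 0 with h4 | h4
    · have h5 : volume (closedBall s r) ≠ 0 := by
        rw [Real.volume_closedBall]
        simp only [ne_eq, ENNReal.ofReal_eq_zero, not_le]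
        linarith
      rw [h4, ENNReal.div_zero h5] at h2
      exact absurd h2 (by simp)
    · exact pos_iff_ne_zero.2 h4
  -- main ε-argument
  rw [Metric.tendsto_nhds]
  intro ε hε
  set ε' : ℝ := ε / 4 with hε'def
  have hε' : 0 < ε' := by positivity
  -- choose δ
  have hsmall : ∀ᶠ R in 𝓝[>] (0:ℝ), ⨍ t in closedBall s R, ‖f t - f s‖ ∂μ < ε' :=
    havg.eventually_lt_const hε'
  obtain ⟨a, ha, haP⟩ := (nhdsGT_basis (0:ℝ)).eventually_iff.1 hsmall
  set δ : ℝ := min (a / 2) 1 with hδdef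
  have hδ0 : 0 < δ := lt_min (by linarith) one_pos
  have hδa : δ < a := lt_of_le_of_lt (min_le_left _ _) (by linarith)
  have hδball : ∀ R, 0 < R → R ≤ δ →
      ∫ t in closedBall s R, ‖f t - f s‖ ∂μ ≤ ε' * (μ (closedBall s R)).toReal := by
    intro R hR0 hRδ
    have h1 := haP ⟨hR0, lt_of_le_of_lt hRδ hδa⟩
    have hfinB : μ (closedBall s R) ≠ ⊤ := (isCompact_closedBall s R).measure_lt_top.ne
    rcases eq_or_ne (μ (closedBall s R)) 0 with h0 | h0
    · have hres : μ.restrict (closedBall s R) = 0 := Measure.restrict_eq_zero.2 h0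
      rw [hres, h0]
      simp
    · have hpos : 0 < (μ (closedBall s R)).toReal := ENNReal.toReal_pos h0 hfinB
      rw [setAverage_eq, smul_eq_mul, measureReal_def, inv_mul_lt_iff₀ hpos] at h1
      calc ∫ t in closedBall s R, ‖f t - f s‖ ∂μ
          ≤ (μ (closedBall s R)).toReal * ε' := h1.le
        _ = ε' * (μ (closedBall s R)).toReal := mul_comm _ _
  have hδball' : ∀ R, 0 < R → R ≤ δ →
      ∫⁻ t in closedBall s R, ENNReal.ofReal ‖f t - f s‖ ∂μ ≤
        ENNReal.ofReal ε' * μ (closedBall s R) := by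
    intro R hR0 hRδ
    have hfinB : μ (closedBall s R) ≠ ⊤ := (isCompact_closedBall s R).measure_lt_top.ne
    have hint : IntegrableOn (fun t => ‖f t - f s‖) (closedBall s R) μ := by
      apply Integrable.norm
      exact (hloc.integrableOn_isCompact (isCompact_closedBall s R)).sub
        (integrableOn_const (isCompact_closedBall s R).measure_lt_top.ne)
    rw [← ofReal_integral_eq_lintegral_ofReal hint (ae_of_all _ fun t => norm_nonneg _)]
    calc ENNReal.ofReal (∫ t in closedBall s R, ‖f t - f s‖ ∂μ)
        ≤ ENNReal.ofReal (ε' * (μ (closedBall s R)).toReal) :=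
          ENNReal.ofReal_le_ofReal (hδball R hR0 hRδ)
      _ = ENNReal.ofReal ε' * ENNReal.ofReal ((μ (closedBall s R)).toReal) :=
          ENNReal.ofReal_mul hε'.le
      _ = ENNReal.ofReal ε' * μ (closedBall s R) := by rw [ENNReal.ofReal_toReal hfinB]
  -- the far-field constant
  set T : ℝ := ∫ t in (closedBall s δ)ᶜ, 1 / (s - t) ^ 2 ∂μ with hTdef
  have hmT : Measurable fun t : ℝ => 1 / (s - t) ^ 2 :=
    measurable_const.div ((measurable_const.sub measurable_id).pow_const 2)
  have hTint : IntegrableOn (fun t : ℝ => 1 / (s - t) ^ 2) (closedBall s δ)ᶜ μ := by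
    refine Integrable.mono' ((hμ.const_mul (2 + (2 * s ^ 2 + 1) / δ ^ 2)).restrict)
      hmT.aestronglyMeasurable ?_
    rw [ae_restrict_iff' measurableSet_closedBall.compl]
    refine ae_of_all _ fun t ht => ?_
    have hd : δ < dist t s := by simpa [mem_closedBall, not_le] using ht
    have habs : δ ≤ |s - t| := by rw [abs_sub_comm, ← Real.dist_eq]; linarith
    have hw := weight_ineq' hδ0 habs
    have hst2 : (0:ℝ) < (s - t) ^ 2 := by
      have h0 : (0:ℝ) < |s - t| := lt_of_lt_of_le hδ0 habs
      rw [← sq_abs]; exact pow_pos h0 2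
    have ht2 : (0:ℝ) < t ^ 2 + 1 := by positivity
    rw [Real.norm_eq_abs, abs_of_pos (by positivity : (0:ℝ) < 1 / (s - t) ^ 2)]
    calc 1 / (s - t) ^ 2 ≤ (2 + (2 * s ^ 2 + 1) / δ ^ 2) / (t ^ 2 + 1) := by
          rw [div_le_div_iff₀ hst2 ht2]
          linarith [hw]
      _ = (2 + (2 * s ^ 2 + 1) / δ ^ 2) * (1 / (t ^ 2 + 1)) := by ring
  have hT0 : (0:ℝ) ≤ T :=
    setIntegral_nonneg measurableSet_closedBall.compl (fun t ht => by positivity)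
  -- eventual bound on the far part coefficient
  set c0 : ℝ := 2 * (2 * K * T + 1) with hc0def
  have hc0 : 0 < c0 := by positivity
  have ev3 : ∀ᶠ r in 𝓝[>] (0:ℝ), c0 * (r ^ 2 / (μ (closedBall s r)).toReal) < ε' := by
    have h1 : Tendsto (fun r : ℝ => c0 * (r ^ 2 / (μ (closedBall s r)).toReal))
        (𝓝[>] (0:ℝ)) (𝓝 0) := by
      have := htoReal.const_mul c0
      simpa using this
    exact h1.eventually_lt_const hε'
  -- final eventual computation
  filter_upwards [ev3, hmupos, self_mem_nhdsWithin] with r hrc0 hrμ hr0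
  have hr : (0:ℝ) < r := hr0
  set k : ℝ → ℝ := fun t => r / ((s - t) ^ 2 + r ^ 2) with hkdef
  have hkint : Integrable k μ := kernel_integrable hμ hr s
  have hkc : Continuous k := kernel_cont hr s
  have hknn : ∀ t, 0 ≤ k t := fun t => (kernel_pos hr s t).le
  set g : ℝ → ℝ := fun t => ‖f t - f s‖ with hgdef
  have hgm : Measurable g := (hfm.sub stronglyMeasurable_const).norm.measurable
  have hgnn : ∀ t, 0 ≤ g t := fun t => norm_nonneg _
  have hgB : ∀ᵐ t ∂μ, g t ≤ 2 * K := by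
    filter_upwards [hKae] with t ht
    calc g t ≤ ‖f t‖ + ‖f s‖ := norm_sub_le _ _
      _ ≤ K + K := add_le_add ht hsK
      _ = 2 * K := by ring
  have hkgint : Integrable (fun t => k t * g t) μ := by
    refine (hkint.const_mul (2 * K)).mono'
      ((hkc.measurable.mul hgm).aestronglyMeasurable) ?_
    filter_upwards [hgB] with t ht
    rw [Real.norm_eq_abs, abs_of_nonneg (mul_nonneg (hknn t) (hgnn t))]
    calc k t * g t ≤ k t * (2 * K) := by
          apply mul_le_mul_of_nonneg_left ht (hknn t)
      _ = 2 * K * k t := by ring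
  have hkfint : Integrable (fun t => ((k t : ℝ) : ℂ) * f t) μ := by
    refine (hkint.const_mul K).mono'
      (((Complex.measurable_ofReal.comp hkc.measurable).mul
        hfm.measurable).aestronglyMeasurable) ?_
    filter_upwards [hKae] with t ht
    rw [norm_mul, Complex.norm_real, Real.norm_eq_abs, abs_of_nonneg (hknn t)]
    calc k t * ‖f t‖ ≤ k t * K := mul_le_mul_of_nonneg_left ht (hknn t)
      _ = K * k t := by ring
  have hkfsint : Integrable (fun t => ((k t : ℝ) : ℂ) * f s) μ :=
    (hkint.ofReal (𝕜 := ℂ)).mul_const (f s)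
  set den : ℝ := ∫ t, k t ∂μ with hden
  have hμB0 : (0:ℝ) < (μ (closedBall s r)).toReal :=
    ENNReal.toReal_pos hrμ.ne' (isCompact_closedBall s r).measure_lt_top.ne
  have hden_ge : 1 / (2 * r) * (μ (closedBall s r)).toReal ≤ den := by
    have h1 : 1 / (2 * r) * (μ (closedBall s r)).toReal ≤ ∫ t in closedBall s r, k t ∂μ := by
      rw [mul_comm, ← smul_eq_mul, ← measureReal_def]
      apply setIntegral_ge_of_const_le measurableSet_closedBall
        (isCompact_closedBall s r).measure_lt_top.ne _ hkint.integrableOn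
      intro t ht
      have hd : dist t s ≤ r := mem_closedBall.1 ht
      have h2 : (s - t) ^ 2 ≤ r ^ 2 := by
        rw [← sq_abs (s - t), abs_sub_comm, ← Real.dist_eq]
        exact pow_le_pow_left₀ dist_nonneg hd 2
      have h3 : (s - t) ^ 2 + r ^ 2 ≤ 2 * r ^ 2 := by linarith
      calc 1 / (2 * r) = r / (2 * r ^ 2) := by
            field_simp
        _ ≤ r / ((s - t) ^ 2 + r ^ 2) :=
            div_le_div_of_nonneg_left hr.le (by positivity) (by linarith)
    calc 1 / (2 * r) * (μ (closedBall s r)).toReal ≤ ∫ t in closedBall s r, k t ∂μ := h1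
      _ ≤ den := setIntegral_le_integral hkint (ae_of_all _ hknn)
  have hdenpos : 0 < den :=
    lt_of_lt_of_le (by positivity) hden_ge
  -- numerator identity
  have hnum : (∫ t, ((k t : ℝ) : ℂ) * f t ∂μ) - (den : ℂ) * f s
      = ∫ t, ((k t : ℝ) : ℂ) * (f t - f s) ∂μ := by
    have h1 : (fun t => ((k t : ℝ) : ℂ) * (f t - f s))
        = fun t => ((k t : ℝ) : ℂ) * f t - ((k t : ℝ) : ℂ) * f s :=
      funext fun t => mul_sub _ _ _
    have hden_c : (∫ t, ((k t : ℝ) : ℂ) ∂μ) = ((den : ℝ) : ℂ) := by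
      rw [hden]
      simpa using integral_ofReal (𝕜 := ℂ) (f := k) (μ := μ)
    rw [h1, integral_sub hkfint hkfsint, integral_mul_const, hden_c]
  have hbound : ‖∫ t, ((k t : ℝ) : ℂ) * (f t - f s) ∂μ‖ ≤ ∫ t, k t * g t ∂μ := by
    calc ‖∫ t, ((k t : ℝ) : ℂ) * (f t - f s) ∂μ‖
        ≤ ∫ t, ‖((k t : ℝ) : ℂ) * (f t - f s)‖ ∂μ := norm_integral_le_integral_norm _
      _ = ∫ t, k t * g t ∂μ := by
          apply integral_congr_ae
          refine ae_of_all _ fun t => ?_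
          show ‖((k t : ℝ) : ℂ) * (f t - f s)‖ = k t * g t
          rw [norm_mul, Complex.norm_real, Real.norm_eq_abs, abs_of_nonneg (hknn t)]
  have hsplit : ∫ t, k t * g t ∂μ
      = (∫ t in closedBall s δ, k t * g t ∂μ) + ∫ t in (closedBall s δ)ᶜ, k t * g t ∂μ :=
    (integral_add_compl measurableSet_closedBall hkgint).symm
  -- near part
  have hnear : ∫ t in closedBall s δ, k t * g t ∂μ ≤ ε' * den := by
    have h1 := near_bound μ hgm hgnn hδ0 (c := ENNReal.ofReal ε') ENNReal.ofReal_ne_top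
      hδball' hr
    have hL : ENNReal.ofReal (∫ t in closedBall s δ, k t * g t ∂μ)
        = ∫⁻ t in closedBall s δ, ENNReal.ofReal (k t * g t) ∂μ :=
      ofReal_integral_eq_lintegral_ofReal hkgint.integrableOn
        (ae_of_all _ fun t => mul_nonneg (hknn t) (hgnn t))
    have hR : (∫⁻ t, ENNReal.ofReal (k t) ∂μ) = ENNReal.ofReal den :=
      (ofReal_integral_eq_lintegral_ofReal hkint (ae_of_all _ hknn)).symm
    rw [← hL, hR, ← ENNReal.ofReal_mul hε'.le] at h1
    exact (ENNReal.ofReal_le_ofReal_iff (by positivity)).1 h1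
  -- far part
  have hfar : ∫ t in (closedBall s δ)ᶜ, k t * g t ∂μ ≤ r * (2 * K * T) := by
    have h1 : ∫ t in (closedBall s δ)ᶜ, k t * g t ∂μ
        ≤ ∫ t in (closedBall s δ)ᶜ, r * (2 * K) * (1 / (s - t) ^ 2) ∂μ := by
      apply setIntegral_mono_ae_restrict hkgint.integrableOn
        (hTint.const_mul (r * (2 * K)))
      rw [EventuallyLE, ae_restrict_iff' measurableSet_closedBall.compl]
      filter_upwards [hgB] with t hgt ht
      have hd : δ < dist t s := by simpa [mem_closedBall, not_le] using ht
      have hst2 : (0:ℝ) < (s - t) ^ 2 := by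
        have h0 : (0:ℝ) < |s - t| := by
          rw [abs_sub_comm, ← Real.dist_eq]; linarith
        rw [← sq_abs]; exact pow_pos h0 2
      have hk1 : k t ≤ r * (1 / (s - t) ^ 2) := by
        rw [hkdef]
        calc r / ((s - t) ^ 2 + r ^ 2) ≤ r / (s - t) ^ 2 :=
              div_le_div_of_nonneg_left hr.le hst2 (by nlinarith)
          _ = r * (1 / (s - t) ^ 2) := by ring
      calc k t * g t ≤ (r * (1 / (s - t) ^ 2)) * (2 * K) :=
            mul_le_mul hk1 hgt (hgnn t) (by positivity)
        _ = r * (2 * K) * (1 / (s - t) ^ 2) := by ring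
    calc ∫ t in (closedBall s δ)ᶜ, k t * g t ∂μ
        ≤ ∫ t in (closedBall s δ)ᶜ, r * (2 * K) * (1 / (s - t) ^ 2) ∂μ := h1
      _ = r * (2 * K) * T := integral_const_mul _ _
      _ = r * (2 * K * T) := by ring
  -- final computation
  have hdenne : ((den : ℝ) : ℂ) ≠ 0 := by
    simpa using hdenpos.ne'
  have heq : (∫ t, ((k t : ℝ) : ℂ) * f t ∂μ) / ((den : ℝ) : ℂ) - f s
      = (∫ t, ((k t : ℝ) : ℂ) * (f t - f s) ∂μ) / ((den : ℝ) : ℂ) := by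
    rw [← hnum, sub_div, mul_div_cancel_left₀ _ hdenne]
  have hfar2 : r * (2 * K * T) / den < ε' := by
    have h5 : r * (2 * K * T) / den
        ≤ r * (2 * K * T + 1) / (1 / (2 * r) * (μ (closedBall s r)).toReal) := by
      have hab : r * (2 * K * T) ≤ r * (2 * K * T + 1) :=
        mul_le_mul_of_nonneg_left (by linarith) hr.le
      exact div_le_div₀ (by positivity) hab (by positivity) hden_ge
    have h6 : r * (2 * K * T + 1) / (1 / (2 * r) * (μ (closedBall s r)).toReal)
        = c0 * (r ^ 2 / (μ (closedBall s r)).toReal) := by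
      rw [hc0def]
      field_simp
    rw [h6] at h5
    exact lt_of_le_of_lt h5 hrc0
  have hkey : dist ((∫ t, ((k t : ℝ) : ℂ) * f t ∂μ) / ((den : ℝ) : ℂ)) (f s) < ε := by
    rw [dist_eq_norm, heq, norm_div]
    have hnden : ‖((den : ℝ) : ℂ)‖ = den := by
      rw [Complex.norm_real, Real.norm_eq_abs, abs_of_pos hdenpos]
    rw [hnden]
    calc ‖∫ t, ((k t : ℝ) : ℂ) * (f t - f s) ∂μ‖ / den
        ≤ (∫ t, k t * g t ∂μ) / den := by gcongr
      _ = ((∫ t in closedBall s δ, k t * g t ∂μ)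
            + ∫ t in (closedBall s δ)ᶜ, k t * g t ∂μ) / den := by rw [← hsplit]
      _ ≤ (ε' * den + r * (2 * K * T)) / den := by gcongr
      _ = ε' + r * (2 * K * T) / den := by
          rw [add_div, mul_div_assoc, div_self hdenpos.ne', mul_one]
      _ < ε' + ε' := by linarith
      _ ≤ ε := by rw [hε'def]; linarith
  exact hkey

end FatouAux

end FatouAuxSection

/-- Bennewitz's extension of Fatou's theorem: if `μ` is a non-negative Borel measure on `ℝ`
with `∫ dμ(t)/(t²+1) < ∞` and `f ∈ L^∞(μ)`, then for `μ`-almost every `s` the Poisson-type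
quotient converges to `f(s)` as `r ↓ 0`. -/
theorem fatou_bennewitz (μ : Measure ℝ)
    (hμ : Integrable (fun t : ℝ => 1 / (t ^ 2 + 1)) μ)
    (f : ℝ → ℂ) (hf : MemLp f ⊤ μ) :
    ∀ᵐ s ∂μ, Tendsto (fun r : ℝ =>
        (∫ t, (r : ℂ) * f t / (((s - t) ^ 2 + r ^ 2 : ℝ) : ℂ) ∂μ) /
          ((∫ t, r / ((s - t) ^ 2 + r ^ 2) ∂μ : ℝ) : ℂ))
      (𝓝[>] 0) (𝓝 (f s)) := by
  set f' := hf.1.mk f with hf'def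
  have hfm : StronglyMeasurable f' := hf.1.stronglyMeasurable_mk
  have hff' : f =ᵐ[μ] f' := hf.1.ae_eq_mk
  have hf' : MemLp f' ⊤ μ := hf.ae_eq hff'
  filter_upwards [FatouAux.main_aux μ hμ f' hfm hf', hff'] with s hs heq
  rw [heq]
  apply hs.congr
  intro r
  congr 1
  apply integral_congr_ae
  filter_upwards [hff'] with t ht
  rw [← ht]
  push_cast
  ring
end

section
/- Let P be an orthogonal projection of rank 1 on ℂ² and let J = [[0, −1], [1, 0]]. Then P J⁻¹ P̄ = 0, where P̄ denotes the entrywise complex conjugate of P. -/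
open Matrix

/-- If `P` is a rank-one orthogonal projection on `ℂ²` and `J = [[0,-1],[1,0]]`,
then `P J⁻¹ P̄ = 0`. -/
theorem rank_one_projection_identity (P : Matrix (Fin 2) (Fin 2) ℂ)
    (hP : Pᴴ = P) (hP2 : P * P = P) (hrank : P.rank = 1) :
    P * (!![0, -1; 1, 0] : Matrix (Fin 2) (Fin 2) ℂ)⁻¹ * P.map (starRingEnd ℂ) = 0 := by
  have hinv : (!![0, -1; 1, 0] : Matrix (Fin 2) (Fin 2) ℂ)⁻¹ = !![0, 1; -1, 0] := by
    apply inv_eq_right_inv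
    ext i j
    fin_cases i <;> fin_cases j <;> simp [Matrix.mul_apply, Fin.sum_univ_two]
  have hmap : P.map (starRingEnd ℂ) = Pᵀ := by
    ext i j
    have := congrFun (congrFun hP i) j
    simp [Matrix.conjTranspose_apply] at this
    simp [Matrix.map_apply, Matrix.transpose_apply, ← this]
  have hdet : P.det = 0 := by
    by_contra h
    have : IsUnit P := isUnit_iff_isUnit_det P |>.mpr (isUnit_iff_ne_zero.mpr h)
    have := P.rank_of_isUnit this
    simp [hrank] at this
  have hadj : P * P.adjugate = 0 := by
    rw [Matrix.mul_adjugate, hdet, zero_smul]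
  have htP : Pᵀ = !![P 0 0, P 1 0; P 0 1, P 1 1] := by
    rw [Matrix.eta_fin_two Pᵀ]
    simp [Matrix.transpose_apply]
  have key : (!![0, 1; -1, 0] : Matrix (Fin 2) (Fin 2) ℂ) * Pᵀ
      = P.adjugate * !![0, 1; -1, 0] := by
    rw [htP, Matrix.adjugate_fin_two, Matrix.mul_fin_two, Matrix.mul_fin_two]
    ext i j
    fin_cases i <;> fin_cases j <;> simp <;> ring
  rw [hinv, hmap, mul_assoc, key, ← mul_assoc, hadj, zero_mul]
end

section
/- Let M : ℂ \ ℝ → Matₙ(ℂ) be analytic on a punctured ball B \ {μ} where B ⊂ ℂ \ ℝ, such that for every z ∈ ℂⁿ the scalar function m = z*Mz satisfies Im m(λ)/Im λ ≥ 0 on B \ {μ}. Then μ is a removable singularity of M. -/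
open Complex Metric Function

lemma herglotz_scalar_ext {f : ℂ → ℂ} {c : ℂ} {r : ℝ} (hr : 0 < r)
    (hd : DifferentiableOn ℂ f (ball c r \ {c}))
    (him : ∀ l ∈ ball c r \ {c}, 0 ≤ (f l).im) :
    ∃ g : ℂ → ℂ, DifferentiableOn ℂ g (ball c r) ∧ ∀ l ∈ ball c r \ {c}, g l = f l := by
  set F : ℂ → ℂ := fun l => (f l + I)⁻¹ with hF
  have hne : ∀ l ∈ ball c r \ {c}, f l + I ≠ 0 := by
    intro l hl h0
    have : (f l + I).im = 0 := by rw [h0]; simp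
    simp only [add_im, I_im] at this
    linarith [him l hl]
  have hFnorm : ∀ l ∈ ball c r \ {c}, ‖F l‖ ≤ 1 := by
    intro l hl
    have h1 : (1 : ℝ) ≤ |(f l + I).im| := by
      simp only [add_im, I_im]
      rw [_root_.abs_of_nonneg (by linarith [him l hl])]
      linarith [him l hl]
    have h2 : (1 : ℝ) ≤ ‖f l + I‖ := h1.trans (Complex.abs_im_le_norm _)
    rw [hF, norm_inv]
    exact inv_le_one_of_one_le₀ h2
  have hFd : DifferentiableOn ℂ F (ball c r \ {c}) :=
    (hd.add_const I).inv hne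
  have hb : BddAbove (norm ∘ F '' (ball c r \ {c})) := by
    refine ⟨1, ?_⟩
    rintro x ⟨l, hl, rfl⟩
    exact hFnorm l hl
  set G : ℂ → ℂ := update F c (Filter.limUnder (nhdsWithin c {c}ᶜ) F) with hG
  have hGd : DifferentiableOn ℂ G (ball c r) :=
    Complex.differentiableOn_update_limUnder_of_bddAbove (ball_mem_nhds c hr) hFd hb
  have hGF : ∀ l ∈ ball c r \ {c}, G l = F l := by
    intro l hl; exact update_of_ne hl.2 _ _
  have hFim : ∀ l ∈ ball c r \ {c}, (F l).im < 0 := by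
    intro l hl
    rw [hF]
    rw [Complex.inv_im]
    have h1 : (f l + I).im = (f l).im + 1 := by simp
    have h2 : 0 < Complex.normSq (f l + I) := by
      rw [Complex.normSq_pos]; exact hne l hl
    rw [h1]
    have : 0 < (f l).im + 1 := by linarith [him l hl]
    exact div_neg_of_neg_of_pos (by linarith) h2
  have hFne0 : ∀ l ∈ ball c r \ {c}, F l ≠ 0 := by
    intro l hl h0
    have := hFim l hl; rw [h0] at this; simp at this
  -- the point c itself: show G c ≠ 0
  have hl0 : (c + ((r/2:ℝ):ℂ)) ∈ ball c r \ {c} := by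
    constructor
    · rw [Metric.mem_ball, Complex.dist_eq, add_sub_cancel_left, Complex.norm_real, Real.norm_eq_abs,
        _root_.abs_of_pos (half_pos hr)]
      linarith
    · simp only [Set.mem_singleton_iff]
      intro h
      have h2 : ((r/2:ℝ):ℂ) = 0 := by linear_combination h
      have h3 : (r/2:ℝ) = 0 := by exact_mod_cast h2
      linarith
  have hGc : G c ≠ 0 := by
    intro h0
    set h : ℂ → ℂ := fun l => Complex.exp (-I * G l) with hh
    have hhd : DifferentiableOn ℂ h (ball c r) := (hGd.const_mul (-I)).cexp
    have hnorm : ∀ l : ℂ, ‖h l‖ = Real.exp ((G l).im) := by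
      intro l
      rw [hh]
      simp only [Complex.norm_exp]
      congr 1
      simp [Complex.mul_re]
    have hmax : IsMaxOn (norm ∘ h) (ball c r) c := by
      intro l hl
      simp only [Function.comp_apply, Set.mem_setOf_eq]
      rw [hnorm, hnorm, h0]
      simp only [Complex.zero_im, Real.exp_zero]
      by_cases hc : l = c
      · subst hc; rw [h0]; simp
      · have := hFim l ⟨hl, hc⟩
        rw [hGF l ⟨hl, hc⟩]
        exact (Real.exp_le_one_iff.2 this.le)
    have heq := Complex.eqOn_of_isPreconnected_of_isMaxOn_norm
      (convex_ball c r).isPreconnected isOpen_ball hhd (mem_ball_self hr) hmax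
    have h1 := heq hl0.1
    simp only [Function.const_apply] at h1
    have h2 : ‖h (c + ((r/2:ℝ):ℂ))‖ = ‖h c‖ := by rw [h1]
    rw [hnorm, hnorm, h0] at h2
    simp only [Complex.zero_im, Real.exp_zero] at h2
    have h3 : (G (c + ((r/2:ℝ):ℂ))).im = 0 := by
      rw [← Real.exp_zero] at h2
      exact Real.exp_eq_exp.mp h2
    rw [hGF _ hl0] at h3
    exact absurd h3 (hFim _ hl0).ne
  have hGne : ∀ l ∈ ball c r, G l ≠ 0 := by
    intro l hl
    by_cases hc : l = c
    · subst hc; exact hGc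
    · rw [hGF l ⟨hl, hc⟩]; exact hFne0 l ⟨hl, hc⟩
  refine ⟨fun l => (G l)⁻¹ - I, (hGd.inv hGne).sub_const I, ?_⟩
  intro l hl
  show (G l)⁻¹ - I = f l
  rw [hGF l hl]
  show ((f l + I)⁻¹)⁻¹ - I = f l
  rw [inv_inv]
  ring

open Matrix

section helpers
open Complex Metric Function

lemma herglotz_quad_polarization {n : ℕ} (A : Matrix (Fin n) (Fin n) ℂ) (i j : Fin n)
    (q : (Fin n → ℂ) → ℂ) (hq : ∀ z, q z = star z ⬝ᵥ (A *ᵥ z)) :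
    (q (Pi.single i (1:ℂ) + Pi.single j (1:ℂ)) - q (Pi.single i (1:ℂ)) - q (Pi.single j (1:ℂ))
      - I * (q (Pi.single i (1:ℂ) + I • (Pi.single j 1 : Fin n → ℂ)) - q (Pi.single i (1:ℂ)) - q (Pi.single j (1:ℂ)))) / 2
      = A i j := by
  have hstar : ∀ k : Fin n, star ((Pi.single k 1 : Fin n → ℂ)) = (Pi.single k 1 : Fin n → ℂ) := by
    intro k; ext m; simp [Pi.single_apply, apply_ite (star : ℂ → ℂ)]
  have atom : ∀ k m : Fin n, (Pi.single k 1 : Fin n → ℂ) ⬝ᵥ (A *ᵥ (Pi.single m 1 : Fin n → ℂ)) = A k m := by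
    intro k m
    rw [Matrix.mulVec_single, single_dotProduct]
    simp
  simp only [hq, star_add, star_smul, Complex.star_def, Complex.conj_I, hstar,
    Matrix.mulVec_add, Matrix.mulVec_smul, add_dotProduct, dotProduct_add,
    smul_dotProduct, dotProduct_smul, smul_eq_mul, neg_smul, neg_dotProduct, atom]
  ring_nf
  linear_combination ((A j i - A i j) / 2 + I * A j j / 2) * Complex.I_sq
end helpers

open Complex Metric Function in
lemma herglotz_matrix_ext {n : ℕ} {M : ℂ → Matrix (Fin n) (Fin n) ℂ} {μ : ℂ} {R : ℝ}
    (hR : 0 < R)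
    (hdiff : ∀ i j, DifferentiableOn ℂ (fun l => M l i j) (Metric.ball μ R \ {μ}))
    (hs : ∀ z : Fin n → ℂ, ∀ l ∈ Metric.ball μ R \ {μ}, 0 ≤ (star z ⬝ᵥ (M l *ᵥ z)).im) :
    ∃ N : ℂ → Matrix (Fin n) (Fin n) ℂ,
      (∀ i j, DifferentiableOn ℂ (fun l => N l i j) (Metric.ball μ R)) ∧
      ∀ l ∈ Metric.ball μ R \ {μ}, N l = M l := by
  have hqd : ∀ z : Fin n → ℂ,
      DifferentiableOn ℂ (fun l => star z ⬝ᵥ (M l *ᵥ z)) (Metric.ball μ R \ {μ}) := by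
    intro z
    have hrw : (fun l => star z ⬝ᵥ (M l *ᵥ z))
        = fun l => ∑ i, star (z i) * ∑ j, M l i j * z j := by
      funext l
      simp [dotProduct, Matrix.mulVec]
    rw [hrw]
    exact DifferentiableOn.fun_sum fun i _ =>
      (DifferentiableOn.fun_sum fun j _ => (hdiff i j).mul_const _).const_mul _
  have H : ∀ z : Fin n → ℂ, ∃ g : ℂ → ℂ, DifferentiableOn ℂ g (Metric.ball μ R) ∧
      ∀ l ∈ Metric.ball μ R \ {μ}, g l = star z ⬝ᵥ (M l *ᵥ z) :=
    fun z => herglotz_scalar_ext hR (hqd z) (hs z)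
  choose g hgd hge using H
  set e : Fin n → (Fin n → ℂ) := fun i => Pi.single i 1 with he
  refine ⟨fun l => Matrix.of fun i j =>
    (g (e i + e j) l - g (e i) l - g (e j) l
      - I * (g (e i + I • e j) l - g (e i) l - g (e j) l)) / 2, ?_, ?_⟩
  · intro i j
    exact ((((hgd _).sub (hgd _)).sub (hgd _)).sub
      ((((hgd _).sub (hgd _)).sub (hgd _)).const_mul I)).div_const 2
  · intro l hl
    ext i j
    show (g (e i + e j) l - g (e i) l - g (e j) l
      - I * (g (e i + I • e j) l - g (e i) l - g (e j) l)) / 2 = M l i j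
    rw [hge _ l hl, hge _ l hl, hge _ l hl, hge _ l hl]
    exact herglotz_quad_polarization (M l) i j (fun z => star z ⬝ᵥ (M l *ᵥ z)) (fun z => rfl)

/-- Removable singularity for matrix-valued functions whose quadratic forms have
half-plane-signed imaginary part: if `M` is analytic on a punctured ball avoiding `ℝ` and
`Im(z*M(λ)z)/Im λ ≥ 0` there for every `z`, then the puncture is a removable singularity. -/
theorem removable_singularity_of_nevanlinna_sign (n : ℕ)
    (M : ℂ → Matrix (Fin n) (Fin n) ℂ) (μ : ℂ) (R : ℝ) (hR : 0 < R)
    (hreal : ∀ l ∈ Metric.ball μ R, Complex.im l ≠ 0)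
    (hdiff : ∀ i j, DifferentiableOn ℂ (fun l => M l i j) (Metric.ball μ R \ {μ}))
    (hsign : ∀ z : Fin n → ℂ, ∀ l ∈ Metric.ball μ R \ {μ},
      0 ≤ (star z ⬝ᵥ (M l *ᵥ z)).im / l.im) :
    ∃ N : ℂ → Matrix (Fin n) (Fin n) ℂ,
      (∀ i j, DifferentiableOn ℂ (fun l => N l i j) (Metric.ball μ R)) ∧
      ∀ l ∈ Metric.ball μ R \ {μ}, N l = M l := by
  have hμ : μ ∈ Metric.ball μ R := Metric.mem_ball_self hR
  have hsame : ∀ l ∈ Metric.ball μ R, 0 < μ.im * l.im := by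
    intro l hl
    rcases lt_trichotomy (μ.im * l.im) 0 with h | h | h
    · exfalso
      -- opposite signs: intermediate value theorem gives a real point
      have hconn := (convex_ball μ R).isPreconnected
      have hcont : ContinuousOn Complex.im (Metric.ball μ R) :=
        Complex.continuous_im.continuousOn
      rcases mul_neg_iff.mp h with ⟨h1, h2⟩ | ⟨h1, h2⟩
      · have h0 : (0:ℝ) ∈ Set.Icc l.im μ.im := ⟨h2.le, h1.le⟩
        obtain ⟨x, hx, hx0⟩ := hconn.intermediate_value hl hμ hcont h0
        exact hreal x hx hx0
      · have h0 : (0:ℝ) ∈ Set.Icc μ.im l.im := ⟨h1.le, h2.le⟩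
        obtain ⟨x, hx, hx0⟩ := hconn.intermediate_value hμ hl hcont h0
        exact hreal x hx hx0
    · exact absurd (mul_eq_zero.mp h) (by
        rintro (h' | h')
        · exact hreal μ hμ h'
        · exact hreal l hl h')
    · exact h
  rcases (hreal μ hμ).lt_or_gt with hneg | hpos
  · -- Im μ < 0, so Im l < 0 on the ball and the quadratic forms of -M have nonneg im part
    have hlneg : ∀ l ∈ Metric.ball μ R, l.im < 0 := by
      intro l hl
      have := hsame l hl
      rcases (hreal l hl).lt_or_gt with h | h
      · exact h
      · nlinarith
    obtain ⟨N', hN'd, hN'e⟩ := herglotz_matrix_ext (M := fun l => -(M l)) hR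
      (fun i j => by
        have : (fun l => (-(M l)) i j) = fun l => -(M l i j) := rfl
        rw [this]; exact (hdiff i j).neg)
      (by
        intro z l hl
        have h1 : star z ⬝ᵥ ((-(M l)) *ᵥ z) = -(star z ⬝ᵥ (M l *ᵥ z)) := by
          rw [Matrix.neg_mulVec, dotProduct_neg]
        rw [h1, Complex.neg_im, neg_nonneg]
        have hlim := hlneg l hl.1
        have h2 := hsign z l hl
        have h3 := mul_nonpos_of_nonneg_of_nonpos h2 hlim.le
        rwa [div_mul_cancel₀ _ hlim.ne] at h3)
    refine ⟨fun l => -(N' l), fun i j => ?_, fun l hl => ?_⟩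
    · have : (fun l => (-(N' l)) i j) = fun l => -(N' l i j) := rfl
      rw [this]; exact (hN'd i j).neg
    · show -(N' l) = M l
      rw [hN'e l hl]; simp
  · -- Im μ > 0
    have hlpos : ∀ l ∈ Metric.ball μ R, 0 < l.im := by
      intro l hl
      have := hsame l hl
      rcases (hreal l hl).lt_or_gt with h | h
      · nlinarith
      · exact h
    exact herglotz_matrix_ext hR hdiff (by
      intro z l hl
      have hlim := hlpos l hl.1
      have h2 := hsign z l hl
      have h3 := mul_nonneg h2 hlim.le
      rwa [div_mul_cancel₀ _ hlim.ne'] at h3)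
end

section
/- Let u, v be complex-valued functions of bounded variation on [c,d] that are balanced, i.e., u = (u⁺ + u⁻)/2 and v = (v⁺ + v⁻)/2 where u± are the one-sided limits. Then ∫_{[c,d]} (u dv + v du) = (uv)⁺(d) − (uv)⁻(c), where du, dv denote the Lebesgue–Stieltjes measures of u, v. -/
open MeasureTheory Set Filter Topology

/-- The balanced kernel: `1` below the diagonal, `1/2` on it, `0` above. -/
noncomputable def kbal (t x : ℝ) : ℂ :=
  if t < x then 1 else if x < t then 0 else 1/2

lemma kbal_add (t x : ℝ) : kbal t x + kbal x t = 1 := by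
  unfold kbal
  rcases lt_trichotomy t x with h | h | h
  · simp [h, asymm h]
  · simp [h]; norm_num
  · simp [h, asymm h]

lemma kbal_measurable : Measurable (fun p : ℝ × ℝ => kbal p.1 p.2) := by
  unfold kbal
  exact Measurable.ite (measurableSet_lt measurable_fst measurable_snd) measurable_const
    (Measurable.ite (measurableSet_lt measurable_snd measurable_fst) measurable_const
      measurable_const)

lemma kbal_norm_le (t x : ℝ) : ‖kbal t x‖ ≤ 1 := by
  unfold kbal; split_ifs <;> norm_num

/-- Pointwise description of the kernel on `[c,d]`. -/
lemma kbal_eq_indicator (c d x : ℝ) (hx : x ∈ Icc c d) (g : ℝ → ℂ) :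
    ∀ t ∈ Icc c d, kbal t x * g t
      = (Icc c x).indicator g t - (1/2 : ℂ) * (Icc x x).indicator g t := by
  intro t ht
  unfold kbal
  rcases lt_trichotomy t x with h | h | h
  · rw [if_pos h, Set.indicator_of_mem (by exact ⟨ht.1, h.le⟩),
      Set.indicator_of_notMem (by simp [Set.mem_Icc]; intro h1; linarith)]
    ring
  · subst h
    rw [if_neg (lt_irrefl t), if_neg (lt_irrefl t),
      Set.indicator_of_mem (by exact ⟨hx.1, le_rfl⟩),
      Set.indicator_of_mem (by exact ⟨le_rfl, le_rfl⟩)]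
    ring
  · rw [if_neg (asymm h), if_pos h,
      Set.indicator_of_notMem (by simp [Set.mem_Icc]; intro h1; linarith),
      Set.indicator_of_notMem (by simp [Set.mem_Icc]; intro h1; linarith)]
    ring

/-- The inner integral of the kernel. -/
lemma kbal_integral (c d x : ℝ) (hx : x ∈ Icc c d) (g : ℝ → ℂ) (ν : Measure ℝ)
    [IsFiniteMeasure ν] (hg : Integrable g ν) :
    ∫ t in Icc c d, kbal t x * g t ∂ν
      = (∫ t in Icc c x, g t ∂ν) - (1/2 : ℂ) * ∫ t in Icc x x, g t ∂ν := by
  rw [setIntegral_congr_fun measurableSet_Icc (kbal_eq_indicator c d x hx g)]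
  rw [integral_sub ((hg.indicator measurableSet_Icc).restrict)
      (((hg.indicator measurableSet_Icc).restrict).const_mul _),
    integral_const_mul, setIntegral_indicator measurableSet_Icc,
    setIntegral_indicator measurableSet_Icc,
    Set.inter_eq_right.mpr (Set.Icc_subset_Icc le_rfl hx.2),
    Set.inter_eq_right.mpr (Set.Icc_subset_Icc hx.1 hx.2)]

/-- Integration by parts for balanced functions of bounded variation: if `u`, `v` are balanced,
with one-sided limits `uR, uL, vR, vL` and Lebesgue–Stieltjes measures `du = gu·νu`,
`dv = gv·νv`, then `∫_{[c,d]} (u dv + v du) = (uv)⁺(d) − (uv)⁻(c)`. -/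
theorem integration_by_parts_balanced (c d : ℝ) (hcd : c ≤ d)
    (u v uR uL vR vL : ℝ → ℂ)
    (νu νv : Measure ℝ) [IsFiniteMeasure νu] [IsFiniteMeasure νv]
    (gu gv : ℝ → ℂ)
    (hguInt : Integrable gu νu) (hgvInt : Integrable gv νv)
    (huR : ∀ x, Tendsto u (𝓝[>] x) (𝓝 (uR x))) (huL : ∀ x, Tendsto u (𝓝[<] x) (𝓝 (uL x)))
    (hvR : ∀ x, Tendsto v (𝓝[>] x) (𝓝 (vR x))) (hvL : ∀ x, Tendsto v (𝓝[<] x) (𝓝 (vL x)))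
    (hubal : ∀ x, u x = (uR x + uL x) / 2) (hvbal : ∀ x, v x = (vR x + vL x) / 2)
    (hdu : ∀ x y, c ≤ x → x ≤ y → y ≤ d → ∫ t in Icc x y, gu t ∂νu = uR y - uL x)
    (hdv : ∀ x y, c ≤ x → x ≤ y → y ≤ d → ∫ t in Icc x y, gv t ∂νv = vR y - vL x) :
    (∫ x in Icc c d, u x * gv x ∂νv) + (∫ x in Icc c d, v x * gu x ∂νu)
      = uR d * vR d - uL c * vL c := by
  have hguI : Integrable gu (νu.restrict (Icc c d)) := hguInt.restrict
  have hgvI : Integrable gv (νv.restrict (Icc c d)) := hgvInt.restrict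
  set P := (νu.restrict (Icc c d)).prod (νv.restrict (Icc c d)) with hP
  have hmul : Integrable (fun p : ℝ × ℝ => gu p.1 * gv p.2) P := hguI.mul_prod hgvI
  have hf : Integrable (fun p : ℝ × ℝ => kbal p.1 p.2 * (gu p.1 * gv p.2)) P :=
    hmul.bdd_mul kbal_measurable.aestronglyMeasurable (ae_of_all _ fun p => kbal_norm_le _ _)
  have hkswap : Measurable (fun p : ℝ × ℝ => kbal p.2 p.1) :=
    kbal_measurable.comp measurable_swap
  have hg : Integrable (fun p : ℝ × ℝ => kbal p.2 p.1 * (gu p.1 * gv p.2)) P :=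
    hmul.bdd_mul hkswap.aestronglyMeasurable (ae_of_all _ fun p => kbal_norm_le _ _)
  have hA : (∫ x in Icc c d, u x * gv x ∂νv)
      = (∫ p, kbal p.1 p.2 * (gu p.1 * gv p.2) ∂P) + uL c * (vR d - vL c) := by
    have h1 : ∀ x ∈ Icc c d, u x * gv x
        = (∫ t in Icc c d, kbal t x * (gu t * gv x) ∂νu) + uL c * gv x := by
      intro x hxm
      have h2 : (∫ t in Icc c d, kbal t x * (gu t * gv x) ∂νu)
          = (∫ t in Icc c d, kbal t x * gu t ∂νu) * gv x := by
        rw [← integral_mul_const]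
        congr 1; funext t; ring
      rw [h2, kbal_integral c d x hxm gu νu hguInt,
        hdu c x le_rfl hxm.1 hxm.2, hdu x x hxm.1 le_rfl hxm.2, hubal x]
      ring
    have e1 : (∫ x in Icc c d, (∫ t in Icc c d, kbal t x * (gu t * gv x) ∂νu) ∂νv)
        = ∫ p, kbal p.1 p.2 * (gu p.1 * gv p.2) ∂P :=
      (integral_prod_symm _ hf).symm
    rw [setIntegral_congr_fun measurableSet_Icc h1,
      integral_add hf.integral_prod_right (hgvI.const_mul _), e1,
      integral_const_mul, hdv c d le_rfl hcd le_rfl]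
  have hB : (∫ x in Icc c d, v x * gu x ∂νu)
      = (∫ p, kbal p.2 p.1 * (gu p.1 * gv p.2) ∂P) + vL c * (uR d - uL c) := by
    have h1 : ∀ x ∈ Icc c d, v x * gu x
        = (∫ t in Icc c d, kbal t x * (gu x * gv t) ∂νv) + vL c * gu x := by
      intro x hxm
      have h2 : (∫ t in Icc c d, kbal t x * (gu x * gv t) ∂νv)
          = (∫ t in Icc c d, kbal t x * gv t ∂νv) * gu x := by
        rw [← integral_mul_const]
        congr 1; funext t; ring
      rw [h2, kbal_integral c d x hxm gv νv hgvInt,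
        hdv c x le_rfl hxm.1 hxm.2, hdv x x hxm.1 le_rfl hxm.2, hvbal x]
      ring
    have e1 : (∫ x in Icc c d, (∫ t in Icc c d, kbal t x * (gu x * gv t) ∂νv) ∂νu)
        = ∫ p, kbal p.2 p.1 * (gu p.1 * gv p.2) ∂P :=
      (integral_prod _ hg).symm
    rw [setIntegral_congr_fun measurableSet_Icc h1,
      integral_add hg.integral_prod_left (hguI.const_mul _), e1,
      integral_const_mul, hdu c d le_rfl hcd le_rfl]
  have hsum : (∫ p, kbal p.1 p.2 * (gu p.1 * gv p.2) ∂P)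
      + (∫ p, kbal p.2 p.1 * (gu p.1 * gv p.2) ∂P)
      = (uR d - uL c) * (vR d - vL c) := by
    rw [← integral_add hf hg]
    have h3 : ∀ p : ℝ × ℝ, kbal p.1 p.2 * (gu p.1 * gv p.2)
        + kbal p.2 p.1 * (gu p.1 * gv p.2) = gu p.1 * gv p.2 := by
      intro p; rw [← add_mul, kbal_add, one_mul]
    simp_rw [h3]
    rw [hP, integral_prod_mul, hdu c d le_rfl hcd le_rfl, hdv c d le_rfl hcd le_rfl]
  rw [hA, hB]
  linear_combination hsum
end
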